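/- arXiv:1811.05707 — 8 statements merged into one kernel-verified Lean document; each statement's English description precedes it below -/
import Mathlib

section
/- For all integers k ≥ 1 and n ≥ 2k, s_{k,n} = \binom{n+2k-3}{n-2k}; that is, \sum_{i=k}^{n-k} \binom{i+k-2}{i-k} \binom{n-i+k-2}{n-i-k} = \binom{n+2k-3}{n-2k}. -/
/-!
Shifting the summation index by `k`, the sum becomes the convolution
`∑_{p+q=n-2k} C(p+2k-2, p) C(q+2k-2, q)`. Since `∑_p C(p+a, p) X^p = (1-X)^{-(a+1)}`,
the convolution `∑_{p+q=m} C(p+a, p) C(q+b, q)` is the coefficient of `X^m` in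
`(1-X)^{-(a+1)} (1-X)^{-(b+1)} = (1-X)^{-(a+b+2)}`, namely `C(m+a+b+1, m)`.
-/

open Finset PowerSeries

theorem Nat.sum_antidiagonal_choose_add_mul_choose_add (a b m : ℕ) :
    ∑ ij ∈ antidiagonal m, (ij.1 + a).choose ij.1 * (ij.2 + b).choose ij.2 =
      (m + a + b + 1).choose m := by
  have h := congrArg (fun f : ℤ⟦X⟧ˣ => coeff m f.val) (invOneSubPow_add ℤ (a + 1) (b + 1))
  simp only [show a + 1 + (b + 1) = a + b + 1 + 1 by ring, Units.val_mul,
    invOneSubPow_val_succ_eq_mk_add_choose, coeff_mul, coeff_mk] at h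
  rw [choose_symm_of_eq_add (show m + a + b + 1 = m + (a + b + 1) by ring),
    show m + a + b + 1 = a + b + 1 + m by ring]
  refine (sum_congr rfl fun ij _ => ?_).trans (mod_cast h.symm)
  rw [choose_symm_add, choose_symm_add, add_comm ij.1, add_comm ij.2]

/-- For `k ≥ 1` and `n ≥ 2k`, the number of directed plateau polycubes of width `k`
and lateral area `n` is `s_{k,n} = C(n+2k-3, n-2k)`. -/
theorem directed_plateau_closed_form (k n : ℕ) (hk : 1 ≤ k) (hn : 2 * k ≤ n) :
    ∑ i ∈ Finset.Icc k (n - k),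
        Nat.choose (i + k - 2) (i - k) * Nat.choose (n - i + k - 2) (n - i - k)
      = Nat.choose (n + 2 * k - 3) (n - 2 * k) := by
  calc ∑ i ∈ Icc k (n - k), (i + k - 2).choose (i - k) * (n - i + k - 2).choose (n - i - k)
      = ∑ pq ∈ antidiagonal (n - 2 * k),
          (pq.1 + (2 * k - 2)).choose pq.1 * (pq.2 + (2 * k - 2)).choose pq.2 := by
        refine sum_nbij' (fun i => (i - k, n - i - k)) (fun pq => pq.1 + k) ?_ ?_ ?_ ?_ ?_
        · intro i hi
          simp only [mem_Icc, HasAntidiagonal.mem_antidiagonal] at hi ⊢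
          omega
        · intro pq hpq
          simp only [mem_Icc, HasAntidiagonal.mem_antidiagonal] at hpq ⊢
          omega
        · intro i hi
          simp only [mem_Icc] at hi
          omega
        · intro pq hpq
          simp only [HasAntidiagonal.mem_antidiagonal] at hpq
          ext <;> dsimp only <;> omega
        · intro i hi
          simp only [mem_Icc] at hi
          congr 2 <;> omega
    _ = (n + 2 * k - 3).choose (n - 2 * k) := by
        rw [Nat.sum_antidiagonal_choose_add_mul_choose_add]
        congr 1
        omega
end

section
/- For every integer k ≥ 1, the identity (1-t)^{4k-2} · S_k(t) = t^{2k} holds in ℤ[[t]], where S_k(t) is the formal power series whose coefficient of t^n equals s_{k,n}. (Equivalently, the generating function of directed plateau polycubes of width k by lateral area is S_k(t) = t^{2k}/(1-t)^{4k-2}.) -/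
/-- `s k n` is the number of directed plateau polycubes of width `k` and lateral area `n`. -/
def dirPlateau (k n : ℕ) : ℕ :=
  ∑ i ∈ Finset.Icc k (n - k),
    Nat.choose (i + k - 2) (i - k) * Nat.choose (n - i + k - 2) (n - i - k)

/-!
The summand of `s_{k,n}` is a product `a_i a_{n-i}` with `a_i = binom(i+k-2, i-k)`, and these
vanish outside `k ≤ i ≤ n - k`, so `S_k = A_k²` with `A_k = ∑ a_i t^i = t^k/(1-t)^{2k-1}`.
-/

open PowerSeries

theorem PowerSeries.coeff_mul_eq_sum_Icc {R : Type*} [CommSemiring R] {φ ψ : R⟦X⟧} {a b : ℕ}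
    (hφ : ∀ i < a, coeff i φ = 0) (hψ : ∀ j < b, coeff j ψ = 0) (n : ℕ) :
    coeff n (φ * ψ) = ∑ i ∈ Finset.Icc a (n - b), coeff i φ * coeff (n - i) ψ := by
  rw [coeff_mul, Finset.Nat.sum_antidiagonal_eq_sum_range_succ_mk]
  symm
  refine Finset.sum_subset (fun i hi => ?_) fun i hin hi => ?_
  · simp only [Finset.mem_Icc] at hi
    simp only [Finset.mem_range]
    omega
  · simp only [Finset.mem_range] at hin
    simp only [Finset.mem_Icc, not_and_or, not_le] at hi
    rcases hi with hi | hi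
    · rw [hφ i hi, zero_mul]
    · rw [hψ (n - i) (by omega), mul_zero]

noncomputable def plateauFactor (k : ℕ) : ℤ⟦X⟧ :=
  X ^ k * mk fun n => ((2 * k - 2 + n).choose (2 * k - 2) : ℤ)

theorem one_sub_X_pow_mul_plateauFactor (k : ℕ) :
    (1 - X : ℤ⟦X⟧) ^ (2 * k - 2 + 1) * plateauFactor k = X ^ k := by
  rw [plateauFactor, mul_left_comm, mul_comm ((1 - X : ℤ⟦X⟧) ^ _),
    mk_add_choose_mul_one_sub_pow_eq_one, mul_one]

theorem coeff_plateauFactor {k : ℕ} (hk : 1 ≤ k) (i : ℕ) :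
    coeff i (plateauFactor k) = if k ≤ i then ((i + k - 2).choose (i - k) : ℤ) else 0 := by
  rw [plateauFactor, mul_comm, coeff_mul_X_pow']
  split_ifs with hki
  · rw [coeff_mk, ← Nat.choose_symm (by omega), show 2 * k - 2 + (i - k) = i + k - 2 by omega,
      show i + k - 2 - (2 * k - 2) = i - k by omega]
  · rfl

theorem mk_dirPlateau_eq_plateauFactor_sq {k : ℕ} (hk : 1 ≤ k) :
    mk (fun n => (dirPlateau k n : ℤ)) = plateauFactor k ^ 2 := by
  have hvanish : ∀ i < k, coeff i (plateauFactor k) = 0 := fun i hi => by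
    rw [coeff_plateauFactor hk, if_neg (by omega)]
  ext n
  rw [coeff_mk, sq, coeff_mul_eq_sum_Icc hvanish hvanish, dirPlateau, Nat.cast_sum]
  refine Finset.sum_congr rfl fun i hi => ?_
  rw [Finset.mem_Icc] at hi
  rw [coeff_plateauFactor hk, coeff_plateauFactor hk, if_pos hi.1, if_pos (by omega),
    Nat.cast_mul]

/-- Generating function of directed plateau polycubes of width `k` by lateral area:
`S_k(t) = t^{2k} / (1-t)^{4k-2}` in `ℤ[[t]]`, stated denominator-free. -/
theorem directed_plateau_gf (k : ℕ) (hk : 1 ≤ k) :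
    (1 - PowerSeries.X : PowerSeries ℤ) ^ (4 * k - 2) *
        PowerSeries.mk (fun n => (dirPlateau k n : ℤ))
      = PowerSeries.X ^ (2 * k) := by
  rw [mk_dirPlateau_eq_plateauFactor_sq hk, show 4 * k - 2 = (2 * k - 2 + 1) * 2 by omega,
    pow_mul, ← mul_pow, one_sub_X_pow_mul_plateauFactor, ← pow_mul, mul_comm]
end

section
/- In the ring of formal power series in two variables x and t over ℤ, let S(x,t) be the series whose coefficient of x^k t^n equals s_{k,n} for k ≥ 1 and is 0 for k = 0 (this is well defined since s_{k,n} = 0 whenever n < 2k). Then S(x,t) · ((1-t)^4 - x t^2) = x t^2 (1-t)^2. -/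
/-- The two-variable generating function of directed plateau polycubes:
the coefficient of `x^k t^n` is `s_{k,n}` for `k ≥ 1`, and `0` for `k = 0`.
Here the variable `x` (coding the width) is `X 0` and `t` (coding the lateral area) is `X 1`. -/
noncomputable def dirPlateauGF : MvPowerSeries (Fin 2) ℤ :=
  fun d => if d 0 = 0 then 0 else (dirPlateau (d 0) (d 1) : ℤ)

/-!
Writing `S = ∑ₖ xᵏ Sₖ(t)`, the number `s_{k,n}` is the coefficient of `tⁿ` in the square of
`tᵏ ∑ᵢ C(2k-2+i, i) tⁱ = tᵏ / (1 - t)^(2k-1)`, so `Sₖ = t^(2k) / (1 - t)^(4k-2)`. Hence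
`S₁ (1 - t)⁴ = t² (1 - t)²` and `S_{k+1} (1 - t)⁴ = t² Sₖ`, which is the identity read
coefficientwise in `x` inside `ℤ⟦t⟧⟦x⟧`.
-/

open PowerSeries

namespace MvPowerSeries

variable (R : Type*) [CommSemiring R]

noncomputable def toPowerSeriesPowerSeries :
    MvPowerSeries (Fin 2) R →+* PowerSeries (PowerSeries R) :=
  (PowerSeries.map (renameEquiv R finOneEquiv).toRingHom).comp (finSuccEquiv R 1).toRingHom

variable {R}

theorem toPowerSeriesPowerSeries_injective : Function.Injective (toPowerSeriesPowerSeries R) :=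
  (map_injective _ (renameEquiv R finOneEquiv).injective).comp (finSuccEquiv R 1).injective

theorem coeff_coeff_toPowerSeriesPowerSeries (F : MvPowerSeries (Fin 2) R) (k n : ℕ) :
    PowerSeries.coeff n (PowerSeries.coeff k (toPowerSeriesPowerSeries R F)) =
      coeff (Finsupp.cons k (Finsupp.single 0 n)) F := by
  rw [← coeff_coeff_finSuccEquiv, ← coeff_embDomain_rename finOneEquiv.toEmbedding,
    Finsupp.embDomain_single]
  rfl

@[simp]
theorem toPowerSeriesPowerSeries_X_zero : toPowerSeriesPowerSeries R (X 0) = PowerSeries.X := by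
  simp [toPowerSeriesPowerSeries]

@[simp]
theorem toPowerSeriesPowerSeries_X_one :
    toPowerSeriesPowerSeries R (X 1) = PowerSeries.C PowerSeries.X := by
  have h := finSuccEquiv_X_succ (R := R) (0 : Fin 1)
  rw [Fin.succ_zero_eq_one] at h
  simp [toPowerSeriesPowerSeries, h, rename_X]
  rfl

end MvPowerSeries

namespace PowerSeries

variable {R : Type*} [CommRing R]

theorem mk_mul_C_sub_C_mul_X_eq_C_mul_X {a : ℕ → R} {b c d : R} (h0 : a 0 = 0)
    (h1 : a 1 * c = d) (hsucc : ∀ k, a (k + 2) * c = b * a (k + 1)) :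
    mk a * (C c - C b * X) = C d * X := by
  ext (_ | _ | k)
  · simp [h0]
  · simp [mul_sub, ← mul_assoc, h0, h1, coeff_succ_mul_X]
  · simp [mul_sub, ← mul_assoc, hsucc, mul_comm, coeff_X]

end PowerSeries

section Counting

open Finset

theorem dirPlateau_succ_add (j m : ℕ) :
    dirPlateau (j + 1) (m + (2 * j + 2)) =
      ∑ p ∈ antidiagonal m, (2 * j + p.1).choose (2 * j) * (2 * j + p.2).choose (2 * j) := by
  rw [Nat.sum_antidiagonal_eq_sum_range_succ_mk, dirPlateau, ← Ico_add_one_right_eq_Icc,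
    sum_Ico_eq_sum_range, show m + (2 * j + 2) - (j + 1) + 1 - (j + 1) = m + 1 by omega]
  refine sum_congr rfl fun p hp ↦ ?_
  rw [mem_range] at hp
  rw [show j + 1 + p + (j + 1) - 2 = 2 * j + p by omega, show j + 1 + p - (j + 1) = p by omega,
    show m + (2 * j + 2) - (j + 1 + p) + (j + 1) - 2 = 2 * j + (m - p) by omega,
    show m + (2 * j + 2) - (j + 1 + p) - (j + 1) = m - p by omega,
    Nat.choose_symm_add, Nat.choose_symm_add]

theorem dirPlateau_succ_of_lt {j n : ℕ} (h : n < 2 * j + 2) : dirPlateau (j + 1) n = 0 := by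
  rw [dirPlateau, Icc_eq_empty (by omega), sum_empty]

end Counting

section WidthSeries

variable (R : Type*) [CommRing R]

theorem mk_dirPlateau_succ (j : ℕ) :
    mk (fun n ↦ (dirPlateau (j + 1) n : R)) =
      X ^ (2 * j + 2) * ((invOneSubPow R (2 * j + 1) : R⟦X⟧)) ^ 2 := by
  ext n
  rw [coeff_mk, coeff_X_pow_mul', invOneSubPow_val_succ_eq_mk_add_choose, sq, coeff_mul]
  split_ifs with h
  · obtain ⟨m, rfl⟩ := Nat.exists_eq_add_of_le' h
    simp [dirPlateau_succ_add]
  · rw [dirPlateau_succ_of_lt (by omega), Nat.cast_zero]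

theorem mk_dirPlateau_one_mul :
    mk (fun n ↦ (dirPlateau 1 n : R)) * (1 - X) ^ 4 = X ^ 2 * (1 - X) ^ 2 := by
  have h : (1 - X) * (invOneSubPow R 1 : R⟦X⟧) = 1 := by
    simpa [invOneSubPow_zero] using
      one_sub_pow_mul_invOneSubPow_val_add_eq_invOneSubPow_val R (d := 0) 1
  calc _ = X ^ 2 * (1 - X) ^ 2 * ((1 - X) * (invOneSubPow R 1 : R⟦X⟧)) ^ 2 := by
        rw [mk_dirPlateau_succ R 0]
        ring
    _ = _ := by rw [h, one_pow, mul_one]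

theorem mk_dirPlateau_add_two_mul (j : ℕ) :
    mk (fun n ↦ (dirPlateau (j + 2) n : R)) * (1 - X) ^ 4 =
      X ^ 2 * mk (fun n ↦ (dirPlateau (j + 1) n : R)) := by
  have h := one_sub_pow_mul_invOneSubPow_val_add_eq_invOneSubPow_val R (d := 2 * j + 1) 2
  rw [mk_dirPlateau_succ R (j + 1), mk_dirPlateau_succ R j, ← h,
    show 2 * (j + 1) + 1 = 2 * j + 1 + 2 by ring]
  ring

end WidthSeries

theorem toPowerSeriesPowerSeries_dirPlateauGF :
    MvPowerSeries.toPowerSeriesPowerSeries ℤ dirPlateauGF =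
      mk fun k ↦ if k = 0 then 0 else mk fun n ↦ (dirPlateau k n : ℤ) := by
  ext k n
  rw [MvPowerSeries.coeff_coeff_toPowerSeriesPowerSeries, coeff_mk]
  have hn : (Finsupp.cons k (Finsupp.single 0 n) : Fin 2 →₀ ℕ) 1 = n :=
    (Finsupp.cons_succ 0 _ _).trans (Finsupp.single_eq_same)
  split_ifs with hk <;> simp [MvPowerSeries.coeff_apply, dirPlateauGF, hk, hn]

/-- `S(x,t) · ((1-t)⁴ - x t²) = x t² (1-t)²` in `ℤ[[x,t]]`; equivalently,
`S(x,t) = x t² (1-t)² / ((1-t)⁴ - x t²)`. -/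
theorem directed_plateau_gf_two_variables :
    dirPlateauGF *
        ((1 - MvPowerSeries.X 1) ^ 4 - MvPowerSeries.X 0 * (MvPowerSeries.X 1) ^ 2)
      = MvPowerSeries.X 0 * (MvPowerSeries.X 1) ^ 2 * (1 - MvPowerSeries.X 1) ^ 2 := by
  apply MvPowerSeries.toPowerSeriesPowerSeries_injective
  simp only [map_mul, map_sub, map_pow, map_one, MvPowerSeries.toPowerSeriesPowerSeries_X_zero,
    MvPowerSeries.toPowerSeriesPowerSeries_X_one, toPowerSeriesPowerSeries_dirPlateauGF]
  calc _ = (mk fun k ↦ if k = 0 then 0 else mk fun n ↦ (dirPlateau k n : ℤ)) *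
        (C ((1 - X) ^ 4) - C (X ^ 2) * X) := by
        simp only [map_sub, map_pow, map_one]
        ring
    _ = C (X ^ 2 * (1 - X) ^ 2) * X :=
        mk_mul_C_sub_C_mul_X_eq_C_mul_X rfl (mk_dirPlateau_one_mul ℤ) (mk_dirPlateau_add_two_mul ℤ)
    _ = _ := by
        simp only [map_mul, map_sub, map_pow, map_one]
        ring
end

section
/- Let S(t) be the formal power series in ℤ[[t]] whose coefficient of t^n equals \sum_{k=1}^{n} s_{k,n} (a finite sum, since s_{k,n} = 0 whenever n < 2k). Then S(t) · ((1-t)^4 - t^2) = t^2 (1-t)^2; that is, the generating function of directed plateau polycubes according to the lateral area is S(t) = t^2(1-t)^2 / ((1-t)^4 - t^2). -/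
open PowerSeries Finset

theorem Finset.sum_Icc_mul_sub_eq_of_succ_mul_eq {R : Type*} [CommRing R] {f : ℕ → R} {a b : R}
    (h : ∀ k, f (k + 1) * a = b * f k) (N : ℕ) :
    (∑ k ∈ Icc 1 N, f k) * (a - b) = b * (f 0 - f N) := by
  induction N with
  | zero => simp
  | succ N ih =>
    rw [sum_Icc_succ_top (by omega), add_mul]
    linear_combination ih + h N

theorem PowerSeries.coeff_mul_eq_of_coeff_eq {R : Type*} [Semiring R] {f g : R⟦X⟧} (h : R⟦X⟧)
    {n : ℕ} (hfg : ∀ m ≤ n, coeff m f = coeff m g) : coeff n (f * h) = coeff n (g * h) := by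
  simp only [coeff_mul]
  refine sum_congr rfl fun p hp => ?_
  rw [hfg p.1 (Finset.HasAntidiagonal.antidiagonal.fst_le hp)]

theorem dirPlateau_eq_zero_of_lt {k n : ℕ} (h : n < 2 * k) : dirPlateau k n = 0 := by
  rw [dirPlateau, Icc_eq_empty (by omega), sum_empty]

variable (R : Type*) [CommRing R]

/-- `W_k = X^k / (1-X)^(2k-1)`, written so that `W_0 = 1 - X`, for which the recurrence
`dirPlateauRoot_succ_mul` still holds. -/
noncomputable def dirPlateauRoot (k : ℕ) : R⟦X⟧ :=
  X ^ k * (1 - X) * (invOneSubPow R (2 * k) : R⟦X⟧)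

theorem dirPlateauRoot_zero : dirPlateauRoot R 0 = 1 - X := by
  simp [dirPlateauRoot, invOneSubPow_zero]

theorem dirPlateauRoot_succ_mul (k : ℕ) :
    dirPlateauRoot R (k + 1) * (1 - X) ^ 2 = X * dirPlateauRoot R k := by
  have h := one_sub_pow_mul_invOneSubPow_val_add_eq_invOneSubPow_val R (2 * k) 2
  rw [show 2 * k + 2 = 2 * (k + 1) by ring] at h
  rw [dirPlateauRoot, dirPlateauRoot, ← h]
  ring

theorem X_pow_dvd_dirPlateauRoot (k : ℕ) : X ^ k ∣ dirPlateauRoot R k :=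
  (dvd_mul_right _ _).mul_right _

variable {R}

theorem coeff_dirPlateauRoot {k : ℕ} (hk : 1 ≤ k) (n : ℕ) :
    coeff n (dirPlateauRoot R k) = if k ≤ n then ((n + k - 2).choose (n - k) : R) else 0 := by
  obtain ⟨j, rfl⟩ := Nat.exists_eq_add_of_le' hk
  have h := one_sub_pow_mul_invOneSubPow_val_add_eq_invOneSubPow_val R (2 * j + 1) 1
  rw [show 2 * j + 1 + 1 = 2 * (j + 1) by ring, pow_one] at h
  rw [dirPlateauRoot, mul_assoc, h, invOneSubPow_val_succ_eq_mk_add_choose, coeff_X_pow_mul',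
    coeff_mk]
  split_ifs with hjn
  · rw [Nat.choose_symm_add]
    congr 2
    omega
  · rfl

theorem coeff_dirPlateauRoot_sq {k : ℕ} (hk : 1 ≤ k) (n : ℕ) :
    coeff n (dirPlateauRoot R k ^ 2) = (dirPlateau k n : R) := by
  rw [sq, coeff_mul, Nat.sum_antidiagonal_eq_sum_range_succ_mk, dirPlateau, Nat.cast_sum]
  simp only [coeff_dirPlateauRoot hk, Nat.cast_mul]
  refine (sum_subset (fun i hi => ?_) fun i _ hi => ?_).symm.trans (sum_congr rfl fun i hi => ?_)
  · simp only [mem_Icc, mem_range] at hi ⊢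
    omega
  · rw [mem_Icc] at hi
    rcases (by omega : ¬k ≤ i ∨ ¬k ≤ n - i) with h | h <;> simp [h]
  · rw [mem_Icc] at hi
    rw [if_pos hi.1, if_pos (by omega)]

theorem sum_dirPlateauRoot_sq_mul (N : ℕ) :
    (∑ k ∈ Icc 1 N, dirPlateauRoot R k ^ 2) * ((1 - X) ^ 4 - X ^ 2)
      = X ^ 2 * (1 - X) ^ 2 - X ^ 2 * dirPlateauRoot R N ^ 2 := by
  have hrec (k : ℕ) :
      dirPlateauRoot R (k + 1) ^ 2 * (1 - X) ^ 4 = X ^ 2 * dirPlateauRoot R k ^ 2 := by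
    linear_combination (dirPlateauRoot R (k + 1) * (1 - X) ^ 2 + X * dirPlateauRoot R k) *
      dirPlateauRoot_succ_mul R k
  rw [sum_Icc_mul_sub_eq_of_succ_mul_eq hrec, dirPlateauRoot_zero]
  ring

theorem coeff_sum_dirPlateauRoot_sq {m N : ℕ} (h : m ≤ N) :
    coeff m (∑ k ∈ Icc 1 N, dirPlateauRoot R k ^ 2) = ∑ k ∈ Icc 1 m, (dirPlateau k m : R) := by
  rw [map_sum, sum_congr rfl fun k hk => coeff_dirPlateauRoot_sq (mem_Icc.mp hk).1 m]
  refine (sum_subset (Icc_subset_Icc_right h) fun k hk hkm => ?_).symm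
  rw [mem_Icc] at hk hkm
  rw [dirPlateau_eq_zero_of_lt (by omega), Nat.cast_zero]

variable (R)

theorem dirPlateau_gf_mul :
    (mk fun n => ((∑ k ∈ Icc 1 n, dirPlateau k n : ℕ) : R)) * ((1 - X) ^ 4 - X ^ 2)
      = X ^ 2 * (1 - X) ^ 2 := by
  ext n
  have hrem : coeff n (X ^ 2 * dirPlateauRoot R n ^ 2) = 0 := by
    have hdvd : X ^ (2 + n * 2) ∣ X ^ 2 * dirPlateauRoot R n ^ 2 := by
      rw [pow_add, pow_mul]
      exact mul_dvd_mul_left _ (pow_dvd_pow_of_dvd (X_pow_dvd_dirPlateauRoot R n) 2)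
    exact X_pow_dvd_iff.mp hdvd n (by omega)
  rw [coeff_mul_eq_of_coeff_eq _ (g := ∑ k ∈ Icc 1 n, dirPlateauRoot R k ^ 2)
      fun m hm => by rw [coeff_mk, coeff_sum_dirPlateauRoot_sq hm, Nat.cast_sum],
    sum_dirPlateauRoot_sq_mul, map_sub, hrem, sub_zero]

/-- The generating function of directed plateau polycubes by lateral area is
`S(t) = t²(1-t)² / ((1-t)⁴ - t²)` in `ℤ[[t]]`, stated denominator-free. -/
theorem directed_plateau_gf_total :
    (PowerSeries.mk (fun n => ((∑ k ∈ Finset.Icc 1 n, dirPlateau k n : ℕ) : ℤ))) *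
        ((1 - PowerSeries.X) ^ 4 - PowerSeries.X ^ 2)
      = PowerSeries.X ^ 2 * (1 - PowerSeries.X) ^ 2 :=
  dirPlateau_gf_mul ℤ
end

section
/- For every integer k ≥ 1, the identity (1-p)^{2k-1} · H_k(p) = p^k · \sum_{i=0}^{k-1} D(k-1-i, i) p^i holds in ℤ[[p]], where H_k(p) is the formal power series whose coefficient of p^n equals h_{k,n}. (Equivalently, the generating function of column-convex polyominoes with exactly k columns according to the area is p^k/(1-p)^{2k-1} · \sum_{i=0}^{k-1} D_{k-i-1,i} p^i.) -/
/-- Integer binomial coefficient with the convention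
`C(a,b) = a!/(b!(a-b)!)` if `0 ≤ b ≤ a` and `C(a,b) = 0` otherwise. -/
def ichoose (a b : ℤ) : ℤ := if 0 ≤ b ∧ b ≤ a then (a.toNat.choose b.toNat : ℤ) else 0

/-- The Delannoy numbers `D(n,m) = ∑_{k=0}^m C(m,k) C(n+m-k, m)`. -/
def delannoy (n m : ℕ) : ℕ :=
  ∑ k ∈ Finset.range (m + 1), Nat.choose m k * Nat.choose (n + m - k) m

/-- `h k n = ∑_{i=0}^{k-1} D(k-1-i, i) C(n-i+k-2, 2k-2)` is the number of
column-convex polyominoes with `k` columns and area `n`. -/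
def ccPoly (k n : ℕ) : ℤ :=
  ∑ i ∈ Finset.range k,
    (delannoy (k - 1 - i) i : ℤ) * ichoose ((n : ℤ) - i + k - 2) (2 * (k : ℤ) - 2)

/-- `r k m = ∑_{i=k}^{m-k} h_{k,i} h_{k,m-i}` is the number of plateau polycubes
of width `k` and lateral area `m`. -/
def plateau (k m : ℕ) : ℤ :=
  ∑ i ∈ Finset.Icc k (m - k), ccPoly k i * ccPoly k (m - i)

/-
The coefficients of `H_k` are the sum over `i < k` of `D(k-1-i, i)` times the shifted binomial
sequence `n ↦ C(n - (k+i) + (2k-2), 2k-2)`, whose generating function is `p^(k+i)/(1-p)^(2k-1)`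
by the negative binomial series `∑ C(m+n, m) pⁿ = 1/(1-p)^(m+1)`.
-/

open PowerSeries

lemma mk_ichoose_sub_add_eq_X_pow_mul (m c : ℕ) :
    (mk fun n : ℕ => ichoose ((n : ℤ) - c + m) m)
      = X ^ c * mk (fun n : ℕ => (Nat.choose (m + n) m : ℤ)) := by
  ext n
  rw [coeff_mk, coeff_X_pow_mul']
  split_ifs with hcn
  · rw [coeff_mk, ichoose, if_pos (by omega)]
    have htoNat : ((n : ℤ) - c + m).toNat = m + (n - c) := by omega
    simp [htoNat]
  · rw [ichoose, if_neg (by omega)]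

lemma one_sub_X_pow_succ_mul_mk_ichoose (m c : ℕ) :
    (1 - X : ℤ⟦X⟧) ^ (m + 1) * (mk fun n : ℕ => ichoose ((n : ℤ) - c + m) m) = X ^ c := by
  rw [mk_ichoose_sub_add_eq_X_pow_mul, mul_left_comm, mul_comm ((1 - X : ℤ⟦X⟧) ^ (m + 1)),
    mk_add_choose_mul_one_sub_pow_eq_one, mul_one]

lemma mk_ccPoly (k : ℕ) :
    mk (fun n => ccPoly k n) = ∑ i ∈ Finset.range k,
      (delannoy (k - 1 - i) i : ℤ⟦X⟧) *
        mk (fun n : ℕ => ichoose ((n : ℤ) - i + k - 2) (2 * (k : ℤ) - 2)) := by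
  ext n
  simp only [coeff_mk, ccPoly, map_sum, ← map_natCast (C (R := ℤ)), coeff_C_mul]

lemma one_sub_X_pow_mul_mk_ichoose_of_lt {k i : ℕ} (hi : i < k) :
    (1 - X : ℤ⟦X⟧) ^ (2 * k - 1) *
        mk (fun n : ℕ => ichoose ((n : ℤ) - i + k - 2) (2 * (k : ℤ) - 2))
      = X ^ (k + i) := by
  have hm : 2 * k - 1 = (2 * k - 2) + 1 := by omega
  have hseq : (fun n : ℕ => ichoose ((n : ℤ) - i + k - 2) (2 * (k : ℤ) - 2))
      = fun n : ℕ => ichoose ((n : ℤ) - (k + i : ℕ) + (2 * k - 2 : ℕ)) (2 * k - 2 : ℕ) := by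
    funext n
    push_cast [Nat.cast_sub (by omega : 2 ≤ 2 * k)]
    ring_nf
  rw [hm, hseq, one_sub_X_pow_succ_mul_mk_ichoose]

theorem column_convex_gf_general (k : ℕ) :
    (1 - PowerSeries.X : PowerSeries ℤ) ^ (2 * k - 1) * PowerSeries.mk (fun n => ccPoly k n)
      = PowerSeries.X ^ k *
          ∑ i ∈ Finset.range k, (delannoy (k - 1 - i) i : PowerSeries ℤ) * PowerSeries.X ^ i := by
  rw [mk_ccPoly, Finset.mul_sum, Finset.mul_sum]
  refine Finset.sum_congr rfl fun i hi => ?_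
  rw [mul_left_comm, one_sub_X_pow_mul_mk_ichoose_of_lt (Finset.mem_range.mp hi), pow_add]
  ring

/-- The generating function of column-convex polyominoes with exactly `k` columns by area is
`H_k(p) = p^k/(1-p)^{2k-1} · ∑_{i=0}^{k-1} D_{k-1-i,i} pⁱ` in `ℤ[[p]]`, stated denominator-free. -/
theorem column_convex_gf (k : ℕ) (hk : 1 ≤ k) :
    (1 - PowerSeries.X : PowerSeries ℤ) ^ (2 * k - 1) * PowerSeries.mk (fun n => ccPoly k n)
      = PowerSeries.X ^ k *
          ∑ i ∈ Finset.range k, (delannoy (k - 1 - i) i : PowerSeries ℤ) * PowerSeries.X ^ i :=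
  column_convex_gf_general k
end

section
/- For every integer k ≥ 2, h_{k,k+1} = 4k - 4; that is, the number of column-convex polyominoes with k columns and area k+1 equals 4k-4. -/
/-! Only the summands `i = 0, 1` of `h_{k,k+1}` survive, since `C(2k-1-i, 2k-2) = 0` for `i ≥ 2`.
They contribute `D(k-1,0) C(2k-1,2k-2) + D(k-2,1) C(2k-2,2k-2) = (2k-1) + (2k-3)`. -/

open Finset

theorem ichoose_natCast (a b : ℕ) : ichoose a b = a.choose b := by
  unfold ichoose
  split_ifs with h
  · simp
  · rw [Nat.choose_eq_zero_of_lt (by omega), Nat.cast_zero]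

theorem ichoose_eq_zero_of_lt {a b : ℤ} (h : a < b) : ichoose a b = 0 :=
  if_neg fun hb => by omega

theorem delannoy_zero_right (n : ℕ) : delannoy n 0 = 1 := by
  simp [delannoy]

theorem delannoy_one_right (n : ℕ) : delannoy n 1 = 2 * n + 1 := by
  simp only [delannoy, sum_range_succ, sum_range_zero, Nat.choose_one_right, Nat.choose_self,
    Nat.choose_zero_right]
  omega

theorem ccPoly_eq_sum_range {k n : ℕ} (hn : n + 1 ≤ 2 * k) :
    ccPoly k n = ∑ i ∈ range (n + 1 - k),
      (delannoy (k - 1 - i) i : ℤ) * (n + k - 2 - i).choose (2 * k - 2) := by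
  have hsub : range (n + 1 - k) ⊆ range k := range_subset_range.2 (by omega)
  rw [ccPoly, ← sum_subset hsub fun i hi hi' => ?vanish]
  case vanish =>
    simp only [mem_range] at hi hi'
    rw [ichoose_eq_zero_of_lt (by omega), mul_zero]
  refine sum_congr rfl fun i hi => ?_
  simp only [mem_range] at hi
  rw [← ichoose_natCast]
  congr <;> omega

/-- The number of column-convex polyominoes with `k` columns and area `k+1` is `4k-4`. -/
theorem ccPoly_area_width_add_one (k : ℕ) (hk : 2 ≤ k) :
    ccPoly k (k + 1) = 4 * (k : ℤ) - 4 := by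
  obtain ⟨m, rfl⟩ : ∃ m, k = m + 2 := ⟨k - 2, by omega⟩
  rw [ccPoly_eq_sum_range (by omega), show m + 2 + 1 + 1 - (m + 2) = 2 by omega,
    sum_range_succ, sum_range_one, show m + 2 - 1 - 1 = m by omega, delannoy_zero_right,
    delannoy_one_right, show m + 2 + 1 + (m + 2) - 2 - 0 = 2 * m + 2 + 1 by omega,
    show m + 2 + 1 + (m + 2) - 2 - 1 = 2 * m + 2 by omega, show 2 * (m + 2) - 2 = 2 * m + 2 by omega,
    Nat.choose_succ_self_right, Nat.choose_self]
  push_cast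
  ring
end

section
/- For every integer k ≥ 6, h_{k,k+5} = (128/15)k^5 - (224/3)k^4 + (1174/3)k^3 - (3784/3)k^2 + (35522/15)k - 2004 (equivalently, 15·h_{k,k+5} = 128k^5 - 1120k^4 + 5870k^3 - 18920k^2 + 35522k - 30060). -/
/-! Only the terms `i ≤ 5` of `h_{k,k+5}` survive, since `C(2k+3-i, 2k-2) = 0` for `i > 5`.
Each surviving term, the Delannoy factor `D(k-1-i, i)` included, is a combination of binomials
`C(x, r)` with `r ≤ 5` and `x` affine in `k`, hence a polynomial in `k`. -/

open Finset

theorem ccPoly_add_of_lt {k j : ℕ} (hj : j < k) :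
    ccPoly k (k + j) = ∑ i ∈ range (j + 1),
      (delannoy (k - 1 - i) i : ℤ) * (2 * k - 2 + (j - i)).choose (j - i) := by
  unfold ccPoly
  refine (sum_subset (range_subset_range.mpr hj) fun i hik hij => ?_).symm.trans
    (sum_congr rfl fun i hi => ?_)
  · rw [mem_range] at hik hij
    rw [ichoose_eq_zero_of_lt (by push_cast; omega), mul_zero]
  · rw [mem_range] at hi
    have top : ((k + j : ℕ) : ℤ) - i + k - 2 = ((2 * k - 2 + (j - i) : ℕ) : ℤ) := by omega
    have bot : 2 * (k : ℤ) - 2 = ((2 * k - 2 : ℕ) : ℤ) := by omega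
    rw [top, bot, ichoose_natCast, Nat.choose_symm_add]

theorem ccPoly_area_width_add_five (k : ℕ) (hk : 6 ≤ k) :
    (ccPoly k (k + 5) : ℚ)
      = 128 / 15 * (k : ℚ) ^ 5 - 224 / 3 * (k : ℚ) ^ 4 + 1174 / 3 * (k : ℚ) ^ 3
          - 3784 / 3 * (k : ℚ) ^ 2 + 35522 / 15 * (k : ℚ) - 2004 := by
  obtain ⟨m, rfl⟩ : ∃ m, k = m + 6 := ⟨k - 6, by omega⟩
  rw [ccPoly_add_of_lt (by omega : 5 < m + 6)]
  simp only [sum_range_succ, sum_range_zero, delannoy]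
  simp only [show 2 * (m + 6) - 2 = 2 * m + 10 by omega, Nat.add_assoc, Nat.reduceAdd,
    Nat.reduceSubDiff, Nat.sub_zero, Nat.add_zero]
  push_cast [Nat.cast_choose_eq_descPochhammer_div, descPochhammer_succ_eval,
    descPochhammer_zero, Polynomial.eval_one, Nat.factorial]
  ring
end

section
/- The numbers r_{k,m} of plateau polycubes of width k and lateral area m satisfy: (1) r_{k,2k} = 1 for every integer k ≥ 1; (2) r_{k,2k+1} = 8k - 8 for every integer k ≥ 2; (3) r_{k,2k+2} = 32k^2 - 70k + 48 for every integer k ≥ 3. -/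
open Finset

theorem delannoy_two_right (n : ℕ) : delannoy n 2 = 2 * n ^ 2 + 2 * n + 1 := by
  have h : (delannoy n 2 : ℚ) = 2 * n ^ 2 + 2 * n + 1 := by
    simp only [delannoy, sum_range_succ, range_one, sum_singleton, Nat.choose_zero_right,
      Nat.choose_self, Nat.sub_zero, Nat.add_sub_cancel, one_mul,
      show n + 2 - 1 = n + 1 by omega, show (2 : ℕ).choose 1 = 2 from rfl]
    push_cast [Nat.cast_choose_two]
    ring
  exact_mod_cast h

theorem ccPoly_self_add {k j : ℕ} (hjk : j < k) :
    ccPoly k (k + j) =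
      ∑ i ∈ range (j + 1), (delannoy (k - 1 - i) i : ℤ) * (2 * k - 2 + (j - i)).choose (j - i) := by
  have hterm : ∀ i ∈ range k, (delannoy (k - 1 - i) i : ℤ) *
      ichoose (((k + j : ℕ) : ℤ) - i + k - 2) (2 * (k : ℤ) - 2) =
      (delannoy (k - 1 - i) i : ℤ) * (2 * k - 2 + j - i).choose (2 * k - 2) := by
    intro i hi
    have hi : i < k := mem_range.mp hi
    rw [show ((k + j : ℕ) : ℤ) - i + k - 2 = ((2 * k - 2 + j - i : ℕ) : ℤ) by omega,
      show 2 * (k : ℤ) - 2 = ((2 * k - 2 : ℕ) : ℤ) by omega, ichoose_natCast]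
  rw [ccPoly, sum_congr rfl hterm,
    ← sum_subset (range_subset_range.mpr (show j + 1 ≤ k by omega))]
  · refine sum_congr rfl fun i hi => ?_
    have hij : i ≤ j := Nat.lt_succ_iff.mp (mem_range.mp hi)
    rw [show 2 * k - 2 + j - i = 2 * k - 2 + (j - i) by omega, Nat.choose_symm_add]
  · intro i hi hij
    have hi : i < k := mem_range.mp hi
    have hij : j < i := by simpa using hij
    rw [Nat.choose_eq_zero_of_lt (by omega), Nat.cast_zero, mul_zero]

theorem ccPoly_self {k : ℕ} (hk : 1 ≤ k) : ccPoly k k = 1 := by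
  simpa [delannoy_zero_right] using ccPoly_self_add (j := 0) hk

theorem ccPoly_self_add_one {k : ℕ} (hk : 2 ≤ k) : ccPoly k (k + 1) = 4 * k - 4 := by
  obtain ⟨m, rfl⟩ : ∃ m, k = m + 2 := ⟨k - 2, by omega⟩
  rw [ccPoly_self_add (by omega)]
  simp only [sum_range_succ, range_one, sum_singleton, Nat.sub_zero, Nat.sub_self,
    show m + 2 - 1 - 1 = m by omega, show 2 * (m + 2) - 2 = 2 * m + 2 by omega,
    delannoy_zero_right, delannoy_one_right, Nat.choose_zero_right, Nat.choose_one_right]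
  push_cast
  ring

theorem ccPoly_self_add_two {k : ℕ} (hk : 3 ≤ k) : ccPoly k (k + 2) = 8 * k ^ 2 - 19 * k + 16 := by
  obtain ⟨m, rfl⟩ : ∃ m, k = m + 3 := ⟨k - 3, by omega⟩
  have hchoose : (2 * m + 6).choose 2 = (m + 3) * (2 * m + 5) := by
    rw [Nat.choose_two_right, show 2 * m + 6 - 1 = 2 * m + 5 by omega,
      show 2 * m + 6 = 2 * (m + 3) by ring, mul_assoc, Nat.mul_div_cancel_left _ two_pos]
  rw [ccPoly_self_add (by omega)]
  simp only [sum_range_succ, range_one, sum_singleton, Nat.sub_zero, Nat.sub_self,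
    show m + 3 - 1 - 1 = m + 1 by omega, show m + 3 - 1 - 2 = m by omega,
    show 2 * (m + 3) - 2 = 2 * m + 4 by omega, show 2 - 1 = 1 from rfl, delannoy_zero_right,
    delannoy_one_right, delannoy_two_right, Nat.choose_zero_right, Nat.choose_one_right, hchoose]
  push_cast
  ring

theorem plateau_two_mul_add (k j : ℕ) :
    plateau k (2 * k + j) = ∑ p ∈ antidiagonal j, ccPoly k (k + p.1) * ccPoly k (k + p.2) := by
  rw [plateau, show 2 * k + j - k = k + j by omega, ← Ico_add_one_right_eq_Icc,
    sum_Ico_eq_sum_range, show k + j + 1 - k = j + 1 by omega,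
    Nat.sum_antidiagonal_eq_sum_range_succ (fun a b => ccPoly k (k + a) * ccPoly k (k + b))]
  refine sum_congr rfl fun i hi => ?_
  have hij : i ≤ j := Nat.lt_succ_iff.mp (mem_range.mp hi)
  rw [show 2 * k + j - (k + i) = k + (j - i) by omega]

/-- First values of `r_{k,m}`: `r_{k,2k} = 1` for `k ≥ 1`, `r_{k,2k+1} = 8k-8` for `k ≥ 2`,
and `r_{k,2k+2} = 32k²-70k+48` for `k ≥ 3`. -/
theorem plateau_first_values :
    (∀ k : ℕ, 1 ≤ k → plateau k (2 * k) = 1) ∧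
    (∀ k : ℕ, 2 ≤ k → plateau k (2 * k + 1) = 8 * (k : ℤ) - 8) ∧
    (∀ k : ℕ, 3 ≤ k → plateau k (2 * k + 2) = 32 * (k : ℤ) ^ 2 - 70 * (k : ℤ) + 48) := by
  refine ⟨fun k hk => ?_, fun k hk => ?_, fun k hk => ?_⟩
  · simpa [ccPoly_self hk] using plateau_two_mul_add k 0
  · rw [plateau_two_mul_add]
    simp only [Nat.sum_antidiagonal_succ, Nat.antidiagonal_zero, sum_singleton, add_zero,
      zero_add, ccPoly_self (by omega : 1 ≤ k), ccPoly_self_add_one hk]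
    ring
  · rw [plateau_two_mul_add]
    simp only [Nat.sum_antidiagonal_succ, Nat.antidiagonal_zero, sum_singleton, add_zero,
      zero_add, ccPoly_self (by omega : 1 ≤ k), ccPoly_self_add_one (by omega : 2 ≤ k),
      ccPoly_self_add_two hk]
    ring
end
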